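/- Let Φ be an n×d real matrix and let s₁, s₂ be disjoint index sets with |s₁| = k₁, |s₂| = k₂. If the RIP constant δ_{k₁+k₂} ≤ 1/2, then the matrix M = Φ_{s₁}ᵀ (I − P{Φ_{s₂}}) Φ_{s₁} is invertible and M^{-1} ⪰ (1/(1+δ_{k₁})) I_{k₁} (i.e., M^{-1} − (1/(1+δ_{k₁}))I is positive semidefinite). -/

import Mathlib

open Matrix Finset

noncomputable section

/-- Number of nonzero entries of a vector. -/
def sparsity {d : ℕ} (x : Fin d → ℝ) : ℕ :=
  (Finset.univ.filter fun i => x i ≠ 0).card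

/-- Squared Euclidean norm. -/
def nsq {k : Type*} [Fintype k] (v : k → ℝ) : ℝ := ∑ i, v i ^ 2

/-- Euclidean (ℓ₂) norm. -/
def l2 {k : Type*} [Fintype k] (v : k → ℝ) : ℝ := Real.sqrt (nsq v)

/-- `Φ` satisfies the order-`t` restricted isometry property with constant `δ`. -/
def satRIP {n d : ℕ} (Φ : Matrix (Fin n) (Fin d) ℝ) (t : ℕ) (δ : ℝ) : Prop :=
  ∀ x : Fin d → ℝ, sparsity x ≤ t →
    (1 - δ) * nsq x ≤ nsq (Φ.mulVec x) ∧ nsq (Φ.mulVec x) ≤ (1 + δ) * nsq x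

/-- The order-`t` RIP constant of `Φ` : the smallest `δ ≥ 0` satisfying the RIP bounds. -/
def ripConst {n d : ℕ} (Φ : Matrix (Fin n) (Fin d) ℝ) (t : ℕ) : ℝ :=
  sInf {δ : ℝ | 0 ≤ δ ∧ satRIP Φ t δ}

/-- The submatrix of `Φ` consisting of the columns indexed by `s`. -/
def cols {n d : ℕ} (Φ : Matrix (Fin n) (Fin d) ℝ) (s : Finset (Fin d)) :
    Matrix (Fin n) {i // i ∈ s} ℝ := Φ.submatrix id (fun i => (i : Fin d))

/-- Orthogonal projection `P{Φ_s} = Φ_s (Φ_sᵀ Φ_s)⁻¹ Φ_sᵀ` onto the column span of `Φ_s`. -/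
def proj {n d : ℕ} (Φ : Matrix (Fin n) (Fin d) ℝ) (s : Finset (Fin d)) :
    Matrix (Fin n) (Fin n) ℝ :=
  cols Φ s * ((cols Φ s)ᵀ * cols Φ s)⁻¹ * (cols Φ s)ᵀ

/-- Least-squares residual `v^{⊥s} = (I - P{Φ_s}) v`. -/
def residVec {n d : ℕ} (Φ : Matrix (Fin n) (Fin d) ℝ) (s : Finset (Fin d)) (y : Fin n → ℝ) :
    Fin n → ℝ := y - (proj Φ s).mulVec y

/-- The `i`-th column of `Φ`. -/
def col {n d : ℕ} (Φ : Matrix (Fin n) (Fin d) ℝ) (i : Fin d) : Fin n → ℝ := fun k => Φ k i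

/-- `x` is a least-squares estimate of `y` supported on `s`:
it is supported on `s` and minimizes `‖y - Φ z‖₂` over all `z` supported on `s`. -/
def leastSq {n d : ℕ} (Φ : Matrix (Fin n) (Fin d) ℝ) (y : Fin n → ℝ) (s : Finset (Fin d))
    (x : Fin d → ℝ) : Prop :=
  (∀ i, i ∉ s → x i = 0) ∧
  ∀ z : Fin d → ℝ, (∀ i, i ∉ s → z i = 0) → nsq (y - Φ.mulVec x) ≤ nsq (y - Φ.mulVec z)

/-- The support of a vector, as a `Finset`. -/
def spt {d : ℕ} (x : Fin d → ℝ) : Finset (Fin d) :=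
  Finset.univ.filter fun i => x i ≠ 0

/-!
Write `A = Φ_{s₁}`, `B = Φ_{s₂}` and `Q = I − P{Φ_{s₂}}`. As `Q` is a symmetric idempotent,
`vᵀ M v = ‖Q A v‖²`. On the one hand `‖Q A v‖² ≤ ‖A v‖² ≤ (1 + δ_{k₁}) ‖v‖²`, i.e.
`M ⪯ (1 + δ_{k₁}) I`. On the other hand `Q A v = A v + B w` for some `w`, and this is `Φ` applied
to a vector supported on `s₁ ∪ s₂`, so the RIP of order `k₁ + k₂` gives
`‖Q A v‖² ≥ (1 − δ_{k₁+k₂}) (‖v‖² + ‖w‖²) ≥ ‖v‖² / 2`; hence `M` is positive definite.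
Conjugating `M ⪯ c I` by `M^{-1/2}` gives `c⁻¹ I ⪯ M⁻¹`.
-/

open scoped MatrixOrder ComplexOrder

namespace Matrix

theorem PosDef.inv_smul_one_le_inv {𝕜 m : Type*} [RCLike 𝕜] [Fintype m] [DecidableEq m]
    {M : Matrix m m 𝕜} (hM : M.PosDef) {c : ℝ} (hc : 0 < c) (h : M ≤ c • 1) :
    c⁻¹ • 1 ≤ M⁻¹ := by
  set S := CFC.sqrt M
  have hSS : S * S = M := CFC.sqrt_mul_sqrt_self M hM.posSemidef.nonneg
  have hS : IsUnit S.det := by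
    refine isUnit_iff_ne_zero.2 fun h0 => hM.det_pos.ne' ?_
    rw [← hSS, det_mul, h0, zero_mul]
  have hSinv : IsSelfAdjoint S⁻¹ := IsHermitian.inv (IsSelfAdjoint.of_nonneg (CFC.sqrt_nonneg M))
  have hlhs : S⁻¹ * M * S⁻¹ = 1 := by
    rw [← hSS, ← Matrix.mul_assoc, Matrix.mul_assoc _ S, nonsing_inv_mul _ hS, Matrix.one_mul,
      mul_nonsing_inv _ hS]
  have hrhs : S⁻¹ * (c • 1) * S⁻¹ = c • M⁻¹ := by
    rw [Matrix.mul_smul, Matrix.mul_one, Matrix.smul_mul, ← Matrix.mul_inv_rev, hSS]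
  have key : 1 ≤ c • M⁻¹ := hlhs ▸ hrhs ▸ hSinv.conjugate_le_conjugate h
  rw [Matrix.le_iff] at key ⊢
  convert key.smul (inv_nonneg.2 hc.le) using 1
  rw [smul_sub, smul_smul, inv_mul_cancel₀ hc.ne', one_smul]

variable {m k : Type*} [Fintype m]

lemma IsSymm.transpose_mul_mul {Q : Matrix m m ℝ} (hQ : Q.IsSymm) (A : Matrix m k ℝ) :
    (Aᵀ * Q * A).IsSymm := by
  rw [IsSymm, transpose_mul, transpose_mul, transpose_transpose, hQ.eq, Matrix.mul_assoc]

lemma posDef_of_forall_mul_dotProduct_le {M : Matrix m m ℝ} (hM : M.IsSymm) {a : ℝ} (ha : 0 < a)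
    (h : ∀ x, a * (x ⬝ᵥ x) ≤ x ⬝ᵥ M *ᵥ x) : M.PosDef :=
  .of_dotProduct_mulVec_pos (isHermitian_iff_isSymm.2 hM) fun x hx =>
    (mul_pos ha (by simpa using dotProduct_star_self_pos_iff.2 hx)).trans_le (by simpa using h x)

variable [Fintype k]

lemma le_smul_one_of_forall_dotProduct_mulVec_le [DecidableEq m] {M : Matrix m m ℝ}
    (hM : M.IsSymm) {c : ℝ} (h : ∀ x, x ⬝ᵥ M *ᵥ x ≤ c * (x ⬝ᵥ x)) : M ≤ c • 1 := by
  refine .of_dotProduct_mulVec_nonneg (isHermitian_iff_isSymm.2 ((isSymm_one.smul c).sub hM))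
    fun x => ?_
  simpa [sub_mulVec, dotProduct_sub, smul_mulVec] using h x

lemma dotProduct_transpose_mul_mul_mulVec (A : Matrix m k ℝ) (Q : Matrix m m ℝ) (x : k → ℝ) :
    x ⬝ᵥ (Aᵀ * Q * A) *ᵥ x = A *ᵥ x ⬝ᵥ Q *ᵥ (A *ᵥ x) := by
  rw [Matrix.mul_assoc, ← mulVec_mulVec, ← mulVec_mulVec, dotProduct_mulVec, vecMul_transpose]

section SymmetricIdempotent

variable {P : Matrix m m ℝ} (hP : P.IsSymm) (hP' : IsIdempotentElem P)
include hP hP'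

lemma IsSymm.dotProduct_mulVec_eq_of_isIdempotentElem (x : m → ℝ) :
    x ⬝ᵥ P *ᵥ x = P *ᵥ x ⬝ᵥ P *ᵥ x := by
  calc x ⬝ᵥ P *ᵥ x = x ⬝ᵥ (Pᵀ * P) *ᵥ x := by rw [hP.eq, hP'.eq]
    _ = P *ᵥ x ⬝ᵥ P *ᵥ x := by rw [← mulVec_mulVec, dotProduct_mulVec, vecMul_transpose]

-- Pythagoras for the orthogonal decomposition `x = P x + (1 - P) x`.
lemma IsSymm.dotProduct_mulVec_le_of_isIdempotentElem (x : m → ℝ) :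
    P *ᵥ x ⬝ᵥ P *ᵥ x ≤ x ⬝ᵥ x := by
  classical
  have hQ : (1 - P).IsSymm := isSymm_one.sub hP
  have h := hQ.dotProduct_mulVec_eq_of_isIdempotentElem hP'.one_sub x
  rw [sub_mulVec, one_mulVec, dotProduct_sub, hP.dotProduct_mulVec_eq_of_isIdempotentElem hP'] at h
  have := dotProduct_star_self_nonneg (x - P *ᵥ x)
  simp only [star_trivial] at this
  linarith

end SymmetricIdempotent

variable [DecidableEq k]

lemma isSymm_mul_inv_transpose_mul_transpose (B : Matrix m k ℝ) :
    (B * (Bᵀ * B)⁻¹ * Bᵀ).IsSymm := by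
  rw [IsSymm, transpose_mul, transpose_mul, transpose_transpose, transpose_nonsing_inv,
    transpose_mul, transpose_transpose, Matrix.mul_assoc]

-- If `Bᵀ B` is singular, its junk inverse `0` makes the projection `0`, still idempotent.
lemma isIdempotentElem_mul_inv_transpose_mul_transpose (B : Matrix m k ℝ) :
    IsIdempotentElem (B * (Bᵀ * B)⁻¹ * Bᵀ) := by
  by_cases hB : IsUnit (Bᵀ * B).det
  · calc B * (Bᵀ * B)⁻¹ * Bᵀ * (B * (Bᵀ * B)⁻¹ * Bᵀ)
        = B * ((Bᵀ * B)⁻¹ * (Bᵀ * B)) * (Bᵀ * B)⁻¹ * Bᵀ := by simp only [Matrix.mul_assoc]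
      _ = B * (Bᵀ * B)⁻¹ * Bᵀ := by rw [nonsing_inv_mul _ hB, Matrix.mul_one]
  · simp [IsIdempotentElem, nonsing_inv_apply_not_isUnit _ hB]

end Matrix

lemma isSymm_one_sub_proj {n d : ℕ} (Φ : Matrix (Fin n) (Fin d) ℝ) (s : Finset (Fin d)) :
    (1 - proj Φ s).IsSymm :=
  isSymm_one.sub (isSymm_mul_inv_transpose_mul_transpose _)

lemma isIdempotentElem_one_sub_proj {n d : ℕ} (Φ : Matrix (Fin n) (Fin d) ℝ)
    (s : Finset (Fin d)) : IsIdempotentElem (1 - proj Φ s) :=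
  (isIdempotentElem_mul_inv_transpose_mul_transpose _).one_sub

lemma exists_one_sub_proj_mulVec_eq {n d : ℕ} (Φ : Matrix (Fin n) (Fin d) ℝ) (s : Finset (Fin d))
    (y : Fin n → ℝ) : ∃ w, (1 - proj Φ s) *ᵥ y = y + cols Φ s *ᵥ w :=
  ⟨-((((cols Φ s)ᵀ * cols Φ s)⁻¹ * (cols Φ s)ᵀ) *ᵥ y), by
    rw [proj, sub_mulVec, one_mulVec, mulVec_neg, mulVec_mulVec, Matrix.mul_assoc,
      sub_eq_add_neg]⟩

lemma nsq_eq_dotProduct {k : Type*} [Fintype k] (v : k → ℝ) : nsq v = v ⬝ᵥ v := by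
  simp only [nsq, dotProduct, sq]

lemma nsq_nonneg {k : Type*} [Fintype k] (v : k → ℝ) : 0 ≤ nsq v :=
  Finset.sum_nonneg fun i _ => sq_nonneg (v i)

lemma nsq_mulVec_le {m k : Type*} [Fintype m] [Fintype k] (A : Matrix m k ℝ) (x : k → ℝ) :
    nsq (A *ᵥ x) ≤ (∑ j, ∑ i, A j i ^ 2) * nsq x := by
  rw [Finset.sum_mul]
  exact Finset.sum_le_sum fun j _ => Finset.sum_mul_sq_le_sq_mul_sq _ (A j) x

section RIPConst

variable {n d : ℕ} (Φ : Matrix (Fin n) (Fin d) ℝ)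

lemma isClosed_setOf_satRIP (t : ℕ) : IsClosed {δ : ℝ | 0 ≤ δ ∧ satRIP Φ t δ} := by
  have : {δ : ℝ | 0 ≤ δ ∧ satRIP Φ t δ} = Set.Ici 0 ∩ ⋂ (x : Fin d → ℝ) (_ : sparsity x ≤ t),
      {δ | (1 - δ) * nsq x ≤ nsq (Φ *ᵥ x)} ∩ {δ | nsq (Φ *ᵥ x) ≤ (1 + δ) * nsq x} := by
    ext δ
    simp [satRIP]
  rw [this]
  exact isClosed_Ici.inter <| isClosed_iInter fun x => isClosed_iInter fun _ =>
    (isClosed_le (by fun_prop) (by fun_prop)).inter (isClosed_le (by fun_prop) (by fun_prop))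

lemma ripConst_mem (t : ℕ) : ripConst Φ t ∈ {δ : ℝ | 0 ≤ δ ∧ satRIP Φ t δ} := by
  set C := ∑ j, ∑ i, Φ j i ^ 2
  have hC : 0 ≤ C := Finset.sum_nonneg fun j _ => Finset.sum_nonneg fun i _ => sq_nonneg _
  refine (isClosed_setOf_satRIP Φ t).csInf_mem ⟨1 + C, by positivity, fun x _ => ?_⟩
    ⟨0, fun _ hδ => hδ.1⟩
  have := nsq_mulVec_le Φ x
  have := nsq_nonneg x
  have := nsq_nonneg (Φ *ᵥ x)
  constructor <;> nlinarith

lemma ripConst_nonneg (t : ℕ) : 0 ≤ ripConst Φ t := (ripConst_mem Φ t).1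

lemma satRIP_ripConst (t : ℕ) : satRIP Φ t (ripConst Φ t) := (ripConst_mem Φ t).2

end RIPConst

section ExtendByZero

variable {ι : Type*} [DecidableEq ι] (s : Finset ι)

def extendByZero (v : s → ℝ) : ι → ℝ := fun i => if h : i ∈ s then v ⟨i, h⟩ else 0

variable {s}

@[simp]
lemma extendByZero_coe (v : s → ℝ) (i : s) : extendByZero s v i = v i := by
  simp [extendByZero]

lemma extendByZero_of_not_mem (v : s → ℝ) {i : ι} (hi : i ∉ s) : extendByZero s v i = 0 := by
  simp [extendByZero, hi]

variable [Fintype ι]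

lemma sum_extendByZero {f : ι → ℝ → ℝ} (hf : ∀ i, f i 0 = 0) (v : s → ℝ) :
    ∑ i, f i (extendByZero s v i) = ∑ i : s, f i (v i) := by
  rw [← Finset.sum_subset (Finset.subset_univ s) fun i _ hi => by
    rw [extendByZero_of_not_mem v hi, hf], ← Finset.sum_coe_sort]
  simp

lemma nsq_extendByZero (v : s → ℝ) : nsq (extendByZero s v) = nsq v :=
  sum_extendByZero (fun _ => zero_pow two_ne_zero) v

lemma nsq_extendByZero_add {t : Finset ι} (hst : Disjoint s t) (v : s → ℝ) (w : t → ℝ) :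
    nsq (extendByZero s v + extendByZero t w) = nsq v + nsq w := by
  have hcross : ∀ i, extendByZero s v i * extendByZero t w i = 0 := fun i => by
    by_cases hi : i ∈ s
    · rw [extendByZero_of_not_mem w (Finset.disjoint_left.1 hst hi), mul_zero]
    · rw [extendByZero_of_not_mem v hi, zero_mul]
  rw [← nsq_extendByZero v, ← nsq_extendByZero w, nsq, nsq, nsq, ← Finset.sum_add_distrib]
  exact Finset.sum_congr rfl fun i _ => by rw [Pi.add_apply, add_sq, mul_assoc, hcross]; ring

end ExtendByZero

lemma sparsity_le_card {d : ℕ} {x : Fin d → ℝ} {s : Finset (Fin d)} (h : ∀ i ∉ s, x i = 0) :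
    sparsity x ≤ s.card :=
  Finset.card_le_card fun i hi => by_contra fun his => (Finset.mem_filter.1 hi).2 (h i his)

lemma mulVec_extendByZero {n d : ℕ} (Φ : Matrix (Fin n) (Fin d) ℝ) (s : Finset (Fin d))
    (v : s → ℝ) : Φ *ᵥ extendByZero s v = cols Φ s *ᵥ v := by
  ext j
  exact sum_extendByZero (fun _ => mul_zero _) v

section RIPColumns

variable {n d : ℕ} {Φ : Matrix (Fin n) (Fin d) ℝ} {t : ℕ} {δ : ℝ}

lemma satRIP.nsq_cols_mulVec_le (h : satRIP Φ t δ) {s : Finset (Fin d)} (hs : s.card ≤ t)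
    (v : s → ℝ) : nsq (cols Φ s *ᵥ v) ≤ (1 + δ) * nsq v := by
  have := (h (extendByZero s v) ((sparsity_le_card fun _ => extendByZero_of_not_mem v).trans hs)).2
  rwa [mulVec_extendByZero, nsq_extendByZero] at this

lemma satRIP.one_sub_mul_le_nsq_cols_mulVec_add (h : satRIP Φ t δ) {s₁ s₂ : Finset (Fin d)}
    (hdisj : Disjoint s₁ s₂) (ht : s₁.card + s₂.card ≤ t) (v : s₁ → ℝ) (w : s₂ → ℝ) :
    (1 - δ) * (nsq v + nsq w) ≤ nsq (cols Φ s₁ *ᵥ v + cols Φ s₂ *ᵥ w) := by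
  have hsupp : ∀ i ∉ s₁ ∪ s₂, (extendByZero s₁ v + extendByZero s₂ w) i = 0 := fun i hi => by
    rw [Finset.mem_union, not_or] at hi
    simp [extendByZero_of_not_mem v hi.1, extendByZero_of_not_mem w hi.2]
  have := (h _ ((sparsity_le_card hsupp).trans ((Finset.card_union_le _ _).trans ht))).1
  rwa [mulVec_add, mulVec_extendByZero, mulVec_extendByZero, nsq_extendByZero_add hdisj] at this

end RIPColumns

section ResidualGram

variable {n d : ℕ} (Φ : Matrix (Fin n) (Fin d) ℝ) (s₁ s₂ : Finset (Fin d))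

def residGram : Matrix s₁ s₁ ℝ := (cols Φ s₁)ᵀ * (1 - proj Φ s₂) * cols Φ s₁

lemma isSymm_residGram : (residGram Φ s₁ s₂).IsSymm :=
  (isSymm_one_sub_proj Φ s₂).transpose_mul_mul _

lemma dotProduct_residGram_mulVec (v : s₁ → ℝ) :
    v ⬝ᵥ residGram Φ s₁ s₂ *ᵥ v = nsq ((1 - proj Φ s₂) *ᵥ (cols Φ s₁ *ᵥ v)) := by
  rw [residGram, dotProduct_transpose_mul_mul_mulVec, nsq_eq_dotProduct,
    (isSymm_one_sub_proj Φ s₂).dotProduct_mulVec_eq_of_isIdempotentElem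
      (isIdempotentElem_one_sub_proj Φ s₂)]

variable {Φ s₁ s₂} {t : ℕ} {δ : ℝ}

lemma satRIP.dotProduct_residGram_mulVec_le (h : satRIP Φ t δ) (hs : s₁.card ≤ t) (v : s₁ → ℝ) :
    v ⬝ᵥ residGram Φ s₁ s₂ *ᵥ v ≤ (1 + δ) * nsq v :=
  calc v ⬝ᵥ residGram Φ s₁ s₂ *ᵥ v = nsq ((1 - proj Φ s₂) *ᵥ (cols Φ s₁ *ᵥ v)) :=
        dotProduct_residGram_mulVec Φ s₁ s₂ v
    _ ≤ nsq (cols Φ s₁ *ᵥ v) := by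
        simpa only [nsq_eq_dotProduct] using (isSymm_one_sub_proj Φ s₂)
          |>.dotProduct_mulVec_le_of_isIdempotentElem (isIdempotentElem_one_sub_proj Φ s₂) _
    _ ≤ (1 + δ) * nsq v := h.nsq_cols_mulVec_le hs v

lemma satRIP.one_sub_mul_le_dotProduct_residGram_mulVec (h : satRIP Φ t δ) (hδ : δ ≤ 1)
    (hdisj : Disjoint s₁ s₂) (ht : s₁.card + s₂.card ≤ t) (v : s₁ → ℝ) :
    (1 - δ) * nsq v ≤ v ⬝ᵥ residGram Φ s₁ s₂ *ᵥ v := by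
  obtain ⟨w, hw⟩ := exists_one_sub_proj_mulVec_eq Φ s₂ (cols Φ s₁ *ᵥ v)
  have := h.one_sub_mul_le_nsq_cols_mulVec_add hdisj ht v w
  rw [dotProduct_residGram_mulVec, hw]
  nlinarith [nsq_nonneg w]

lemma satRIP.posDef_residGram (h : satRIP Φ t δ) (hδ : δ < 1) (hdisj : Disjoint s₁ s₂)
    (ht : s₁.card + s₂.card ≤ t) : (residGram Φ s₁ s₂).PosDef :=
  posDef_of_forall_mul_dotProduct_le (isSymm_residGram Φ s₁ s₂) (sub_pos.2 hδ) fun v => by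
    simpa only [nsq_eq_dotProduct] using
      h.one_sub_mul_le_dotProduct_residGram_mulVec hδ.le hdisj ht v

lemma satRIP.residGram_le_smul_one (h : satRIP Φ t δ) (hs : s₁.card ≤ t) :
    residGram Φ s₁ s₂ ≤ (1 + δ) • 1 :=
  le_smul_one_of_forall_dotProduct_mulVec_le (isSymm_residGram Φ s₁ s₂) fun v => by
    simpa only [nsq_eq_dotProduct] using h.dotProduct_residGram_mulVec_le hs v

end ResidualGram

/-- for disjoint `s₁, s₂` with `δ_{k₁+k₂} ≤ 1/2`, the matrix
`M = Φ_{s₁}ᵀ (I − P{Φ_{s₂}}) Φ_{s₁}` is invertible and `M⁻¹ ⪰ (1/(1+δ_{k₁})) I`. -/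
theorem stmt4 {n d : ℕ} (Φ : Matrix (Fin n) (Fin d) ℝ) (s₁ s₂ : Finset (Fin d))
    (hdisj : Disjoint s₁ s₂)
    (hδ : ripConst Φ (s₁.card + s₂.card) ≤ 1 / 2) :
    IsUnit ((cols Φ s₁)ᵀ * (1 - proj Φ s₂) * cols Φ s₁) ∧
    (((cols Φ s₁)ᵀ * (1 - proj Φ s₂) * cols Φ s₁)⁻¹ -
      (1 / (1 + ripConst Φ s₁.card)) •
        (1 : Matrix {i // i ∈ s₁} {i // i ∈ s₁} ℝ)).PosSemidef := by
  have hpos : (residGram Φ s₁ s₂).PosDef :=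
    (satRIP_ripConst Φ _).posDef_residGram (by linarith) hdisj le_rfl
  have hle : residGram Φ s₁ s₂ ≤ (1 + ripConst Φ s₁.card) • 1 :=
    (satRIP_ripConst Φ _).residGram_le_smul_one le_rfl
  refine ⟨hpos.isUnit, ?_⟩
  rw [one_div]
  exact hpos.inv_smul_one_le_inv (by linarith [ripConst_nonneg Φ s₁.card]) hle
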